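/- arXiv:1812.00721 — 2 statements merged into one kernel-verified Lean document; each statement's English description precedes it below -/
import Mathlib

section
/- Let X₁, …, Xₙ be processes on [0,1] such that the vector process (X₁, …, Xₙ) satisfies the Sign Choice property, and let y₁, …, yₙ ∈ {0,1} be arbitrary labels. Then, with probability one, there exists t₀ ∈ [0,1] such that Xᵢ(t₀) > 0 for all i with yᵢ = 1 and Xᵢ(t₀) < 0 for all i with yᵢ = 0; consequently the supremum of the RKHS logistic log-likelihood over β ∈ H(K), β₀ ∈ ℝ equals 0 and is not attained, i.e. the MLE does not exist. -/
/-!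
Choosing in the Sign Choice property the sign pattern `sᵢ = 2yᵢ - 1` of the labels gives, almost
surely, a time `t₀` at which the sign of `Xᵢ(t₀)` classifies every observation correctly: the sample
is perfectly separated. Along `β_c = c·K(t₀,·)` every margin `(2yᵢ - 1)·c·Xᵢ(t₀)` tends to `+∞`, so each
log-likelihood term `-log (1 + exp (-margin))` tends to `0`; since each term is strictly negative,
the supremum `0` of the log-likelihood is not attained.
-/

open MeasureTheory Finset Filter Topology Real

noncomputable def logisticLogLik (y u : ℝ) : ℝ :=
  log ((1 + exp (-u))⁻¹ ^ y * (1 - (1 + exp (-u))⁻¹) ^ (1 - y))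

-- `2y - 1 = ±1` is the label written as a sign, so `(2y - 1) * u` is the margin of the prediction.
theorem logisticLogLik_eq {y : ℝ} (hy : y = 0 ∨ y = 1) (u : ℝ) :
    logisticLogLik y u = -log (1 + exp (-((2 * y - 1) * u))) := by
  rcases hy with rfl | rfl
  · have h : 1 - (1 + exp (-u))⁻¹ = (1 + exp u)⁻¹ := by
      rw [exp_neg]
      field_simp
      ring
    norm_num [logisticLogLik, h]
  · norm_num [logisticLogLik]

theorem logisticLogLik_neg {y : ℝ} (hy : y = 0 ∨ y = 1) (u : ℝ) : logisticLogLik y u < 0 := by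
  rw [logisticLogLik_eq hy, neg_lt_zero]
  exact log_pos (lt_add_of_pos_right 1 (exp_pos _))

theorem tendsto_logisticLogLik_zero {α : Type*} {l : Filter α} {y : ℝ} (hy : y = 0 ∨ y = 1)
    {u : α → ℝ} (hu : Tendsto (fun a => (2 * y - 1) * u a) l atTop) :
    Tendsto (fun a => logisticLogLik y (u a)) l (𝓝 0) := by
  have h := ((tendsto_exp_neg_atTop_nhds_zero.comp hu).const_add 1).log (by norm_num)
  simpa [logisticLogLik_eq hy] using h.neg

noncomputable def logisticLogLikelihood {n : ℕ} (y u : Fin n → ℝ) : ℝ :=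
  (1 / (n : ℝ)) * ∑ i, logisticLogLik (y i) (u i)

section
variable {n : ℕ} {y : Fin n → ℝ}

theorem logisticLogLikelihood_neg (hn : 0 < n) (hy : ∀ i, y i = 0 ∨ y i = 1) (u : Fin n → ℝ) :
    logisticLogLikelihood y u < 0 := by
  have : Nonempty (Fin n) := Fin.pos_iff_nonempty.mp hn
  exact mul_neg_of_pos_of_neg (by positivity)
    (sum_neg (fun i _ => logisticLogLik_neg (hy i) (u i)) univ_nonempty)

theorem tendsto_logisticLogLikelihood_zero {α : Type*} {l : Filter α}
    (hy : ∀ i, y i = 0 ∨ y i = 1) {u : α → Fin n → ℝ}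
    (hu : ∀ i, Tendsto (fun a => (2 * y i - 1) * u a i) l atTop) :
    Tendsto (fun a => logisticLogLikelihood y (u a)) l (𝓝 0) := by
  have h := (tendsto_finsetSum univ fun i _ => tendsto_logisticLogLik_zero (hy i) (hu i)).const_mul
    (1 / (n : ℝ))
  simpa [logisticLogLikelihood] using h

theorem isLUB_logisticLogLikelihood_of_separable {D H : Type*} (hn : 0 < n)
    (hy : ∀ i, y i = 0 ∨ y i = 1) (ev : H → D → ℝ) (x : Fin n → D) {β : ℝ → H}
    (hβ : ∀ i, Tendsto (fun c => (2 * y i - 1) * ev (β c) (x i)) atTop atTop) :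
    IsLUB {L | ∃ (β : H) (β₀ : ℝ), L = logisticLogLikelihood y fun i => β₀ + ev β (x i)} 0 ∧
      0 ∉ {L | ∃ (β : H) (β₀ : ℝ), L = logisticLogLikelihood y fun i => β₀ + ev β (x i)} := by
  set S := {L | ∃ (β : H) (β₀ : ℝ), L = logisticLogLikelihood y fun i => β₀ + ev β (x i)}
  have hneg : ∀ L ∈ S, L < 0 := by
    rintro L ⟨β, β₀, rfl⟩
    exact logisticLogLikelihood_neg hn hy _
  have hlim : Tendsto (fun c => logisticLogLikelihood y fun i => 0 + ev (β c) (x i)) atTop (𝓝 0) :=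
    tendsto_logisticLogLikelihood_zero hy (by simpa using hβ)
  have hclosure : 0 ∈ closure S :=
    mem_closure_of_tendsto hlim (Eventually.of_forall fun c => ⟨β c, 0, rfl⟩)
  exact ⟨isLUB_of_mem_closure (fun L hL => (hneg L hL).le) hclosure, fun h => (hneg 0 h).false⟩

end

theorem mul_pos_of_sign_eq {r s : ℝ} (h : Real.sign r = s) (hs : s ≠ 0) : 0 < s * r := by
  subst h
  exact sign_mul_pos_of_ne_zero r (fun hr => hs (by rw [hr, sign_zero]))

theorem mle_nonexistence_of_sign_choice_general
    {Ω : Type*} [MeasurableSpace Ω] (μ : Measure Ω)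
    {n : ℕ} (hn : 0 < n) (X : Fin n → ℝ → Ω → ℝ)
    -- Sign Choice property of the vector process (X₁, …, Xₙ) on [0,1]
    (hSC : ∀ s : Fin n → ℝ, (∀ i, s i = 1 ∨ s i = -1) →
      ∀ᵐ ω ∂μ, ∃ t₀ ∈ Set.Icc (0:ℝ) 1, ∀ i, Real.sign (X i t₀ ω) = s i)
    -- labels
    (y : Fin n → ℝ) (hy : ∀ i, y i = 0 ∨ y i = 1)
    -- the RKHS `H(K)` and the pairing `⟨β, x⟩_K` (inverse Loève isometry)
    {H : Type*} (ev : H → (ℝ → ℝ) → ℝ)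
    -- for every `t₀ ∈ [0,1]` and `c ∈ ℝ`, the function `c·K(t₀,·)` lies in `H(K)`
    -- and pairs with a trajectory `x` to give `c·x(t₀)`
    (hker : ∀ t₀ ∈ Set.Icc (0:ℝ) 1, ∀ c : ℝ, ∃ β : H,
      ∀ x : ℝ → ℝ, ev β x = c * x t₀) :
    ∀ᵐ ω ∂μ,
      (∃ t₀ ∈ Set.Icc (0:ℝ) 1,
        (∀ i, y i = 1 → 0 < X i t₀ ω) ∧ (∀ i, y i = 0 → X i t₀ ω < 0)) ∧
      IsLUB { L : ℝ | ∃ (β : H) (β₀ : ℝ),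
          L = (1 / (n : ℝ)) * ∑ i, Real.log
            (((1 + Real.exp (-β₀ - ev β (fun t => X i t ω)))⁻¹) ^ (y i) *
              (1 - (1 + Real.exp (-β₀ - ev β (fun t => X i t ω)))⁻¹) ^ (1 - y i)) } 0 ∧
      (0 : ℝ) ∉ { L : ℝ | ∃ (β : H) (β₀ : ℝ),
          L = (1 / (n : ℝ)) * ∑ i, Real.log
            (((1 + Real.exp (-β₀ - ev β (fun t => X i t ω)))⁻¹) ^ (y i) *
              (1 - (1 + Real.exp (-β₀ - ev β (fun t => X i t ω)))⁻¹) ^ (1 - y i)) } := by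
  have hs : ∀ i, 2 * y i - 1 = 1 ∨ 2 * y i - 1 = -1 := fun i => by
    rcases hy i with h | h <;> norm_num [h]
  filter_upwards [hSC _ hs] with ω ⟨t₀, ht₀, hsign⟩
  have hmargin : ∀ i, 0 < (2 * y i - 1) * X i t₀ ω := fun i =>
    mul_pos_of_sign_eq (hsign i) (by rcases hs i with h | h <;> norm_num [h])
  choose β hβ using hker t₀ ht₀
  have hsep : ∀ i, Tendsto (fun c => (2 * y i - 1) * ev (β c) fun t => X i t ω) atTop atTop := by
    intro i
    simp_rw [hβ, mul_left_comm (2 * y i - 1)]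
    exact tendsto_id.atTop_mul_const (hmargin i)
  refine ⟨⟨t₀, ht₀, fun i hi => ?_, fun i hi => ?_⟩, ?_⟩
  · simpa [hi] using hmargin i
  · simpa [hi] using hmargin i
  · have h := isLUB_logisticLogLikelihood_of_separable hn hy ev (fun i t => X i t ω) hsep
    simp only [logisticLogLikelihood, logisticLogLik, neg_add'] at h
    exact h

theorem mle_nonexistence_of_sign_choice
    {Ω : Type*} [MeasurableSpace Ω] (μ : Measure Ω) [IsProbabilityMeasure μ]
    {n : ℕ} (hn : 0 < n) (X : Fin n → ℝ → Ω → ℝ)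
    -- Sign Choice property of the vector process (X₁, …, Xₙ) on [0,1]
    (hSC : ∀ s : Fin n → ℝ, (∀ i, s i = 1 ∨ s i = -1) →
      ∀ᵐ ω ∂μ, ∃ t₀ ∈ Set.Icc (0:ℝ) 1, ∀ i, Real.sign (X i t₀ ω) = s i)
    -- labels
    (y : Fin n → ℝ) (hy : ∀ i, y i = 0 ∨ y i = 1)
    -- the RKHS `H(K)` and the pairing `⟨β, x⟩_K` (inverse Loève isometry)
    {H : Type*} (ev : H → (ℝ → ℝ) → ℝ)
    -- for every `t₀ ∈ [0,1]` and `c ∈ ℝ`, the function `c·K(t₀,·)` lies in `H(K)`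
    -- and pairs with a trajectory `x` to give `c·x(t₀)`
    (hker : ∀ t₀ ∈ Set.Icc (0:ℝ) 1, ∀ c : ℝ, ∃ β : H,
      ∀ x : ℝ → ℝ, ev β x = c * x t₀) :
    ∀ᵐ ω ∂μ,
      (∃ t₀ ∈ Set.Icc (0:ℝ) 1,
        (∀ i, y i = 1 → 0 < X i t₀ ω) ∧ (∀ i, y i = 0 → X i t₀ ω < 0)) ∧
      IsLUB { L : ℝ | ∃ (β : H) (β₀ : ℝ),
          L = (1 / (n : ℝ)) * ∑ i, Real.log
            (((1 + Real.exp (-β₀ - ev β (fun t => X i t ω)))⁻¹) ^ (y i) *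
              (1 - (1 + Real.exp (-β₀ - ev β (fun t => X i t ω)))⁻¹) ^ (1 - y i)) } 0 ∧
      (0 : ℝ) ∉ { L : ℝ | ∃ (β : H) (β₀ : ℝ),
          L = (1 / (n : ℝ)) * ∑ i, Real.log
            (((1 + Real.exp (-β₀ - ev β (fun t => X i t ω)))⁻¹) ^ (y i) *
              (1 - (1 + Real.exp (-β₀ - ev β (fun t => X i t ω)))⁻¹) ^ (1 - y i)) } :=
  mle_nonexistence_of_sign_choice_general μ hn X hSC y hy ev hker
end

section
/- Suppose Y given X follows the logistic model with true parameters β* (slope) and β₀* (intercept), i.e. P(Y=1|X) = σ(β₀* + Ψ_X^{−1}(β*)). If (β, β₀) is any parameter pair such that the expected log-likelihood L(β, β₀) equals L(β*, β₀*), and the random variables Ψ_X^{−1}(β) and Ψ_X^{−1}(β*) both have mean zero while Ψ_X is injective, then β₀ = β₀* and β = β*. -/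
/-!
With `p = σ(β₀* + Ψ⁻¹ β*)` the true and `q = σ(β₀ + Ψ⁻¹ β)` the candidate success probability,
the integrand of the expected log-likelihood is `p log q + (1 - p) log (1 - q)`. By Gibbs'
inequality (`log x ≤ x - 1`) it is at most its value at `q = p`, with equality only there. Equal
expected log-likelihoods therefore force `q = p`, hence equal linear predictors, almost surely.
Taking expectations of `β₀ + Ψ⁻¹ β = β₀* + Ψ⁻¹ β*` identifies the intercepts, and then the
slopes by injectivity.
-/

open MeasureTheory Real Set

noncomputable def bernoulliLogLik (p q : ℝ) : ℝ := p * log q + (1 - p) * log (1 - q)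

lemma bernoulliLogLik_lt_self {p q : ℝ} (hp : p ∈ Ioo 0 1) (hq : q ∈ Ioo 0 1) (hqp : q ≠ p) :
    bernoulliLogLik p q < bernoulliLogLik p p := by
  obtain ⟨hp0, hp1⟩ := hp
  obtain ⟨hq0, hq1⟩ := hq
  have hp1' : 0 < 1 - p := sub_pos.2 hp1
  have hq1' : 0 < 1 - q := sub_pos.2 hq1
  have hsucc : log q - log p < q / p - 1 := by
    rw [← log_div hq0.ne' hp0.ne']
    exact log_lt_sub_one_of_pos (div_pos hq0 hp0) (by rwa [Ne, div_eq_one_iff_eq hp0.ne'])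
  have hfail : log (1 - q) - log (1 - p) ≤ (1 - q) / (1 - p) - 1 := by
    rw [← log_div hq1'.ne' hp1'.ne']
    exact log_le_sub_one_of_pos (div_pos hq1' hp1')
  calc bernoulliLogLik p q
      < bernoulliLogLik p p + p * (q / p - 1) + (1 - p) * ((1 - q) / (1 - p) - 1) := by
        unfold bernoulliLogLik
        nlinarith [mul_lt_mul_of_pos_left hsucc hp0, mul_le_mul_of_nonneg_left hfail hp1'.le]
    _ = bernoulliLogLik p p := by field_simp; ring

lemma bernoulliLogLik_le_self {p q : ℝ} (hp : p ∈ Ioo 0 1) (hq : q ∈ Ioo 0 1) :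
    bernoulliLogLik p q ≤ bernoulliLogLik p p := by
  rcases eq_or_ne q p with rfl | hqp
  · exact le_rfl
  · exact (bernoulliLogLik_lt_self hp hq hqp).le

lemma bernoulliLogLik_eq_self_iff {p q : ℝ} (hp : p ∈ Ioo 0 1) (hq : q ∈ Ioo 0 1) :
    bernoulliLogLik p q = bernoulliLogLik p p ↔ q = p := by
  refine ⟨fun h => ?_, fun h => h ▸ rfl⟩
  by_contra hqp
  exact (bernoulliLogLik_lt_self hp hq hqp).ne h

lemma sigmoid_mem_Ioo (x : ℝ) : sigmoid x ∈ Ioo 0 1 := ⟨sigmoid_pos x, sigmoid_lt_one x⟩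

lemma abs_log_sigmoid_le (t : ℝ) : |log (sigmoid t)| ≤ log 2 + |t| := by
  have hA : 0 < 1 + exp (-t) := by positivity
  have hA_le : 1 + exp (-t) ≤ 2 * exp |t| := by
    linarith [exp_le_exp.2 (neg_le_abs t), one_le_exp (abs_nonneg t)]
  rw [sigmoid_def, log_inv, abs_neg, abs_of_nonneg (log_nonneg (by linarith [exp_pos (-t)]))]
  calc log (1 + exp (-t)) ≤ log (2 * exp |t|) := log_le_log hA hA_le
    _ = log 2 + |t| := by rw [log_mul two_ne_zero (exp_ne_zero _), log_exp]

lemma abs_bernoulliLogLik_sigmoid_le (s t : ℝ) :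
    |bernoulliLogLik (sigmoid s) (sigmoid t)| ≤ log 2 + |t| := by
  have hp0 := sigmoid_nonneg s
  have hp1 : 0 ≤ 1 - sigmoid s := sub_nonneg.2 (sigmoid_le_one s)
  have hsucc := abs_log_sigmoid_le t
  have hfail : |log (1 - sigmoid t)| ≤ log 2 + |t| := by
    simpa [← sigmoid_neg] using abs_log_sigmoid_le (-t)
  calc |bernoulliLogLik (sigmoid s) (sigmoid t)|
      ≤ sigmoid s * |log (sigmoid t)| + (1 - sigmoid s) * |log (1 - sigmoid t)| := by
        unfold bernoulliLogLik
        refine (abs_add_le _ _).trans_eq ?_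
        rw [abs_mul, abs_mul, abs_of_nonneg hp0, abs_of_nonneg hp1]
    _ ≤ sigmoid s * (log 2 + |t|) + (1 - sigmoid s) * (log 2 + |t|) := by gcongr
    _ = log 2 + |t| := by ring

section Integral

variable {Ω : Type*} [MeasurableSpace Ω] {μ : Measure Ω}

lemma integrable_bernoulliLogLik_sigmoid [IsFiniteMeasure μ] {S T : Ω → ℝ}
    (hS : AEStronglyMeasurable S μ) (hT : Integrable T μ) :
    Integrable (fun ω => bernoulliLogLik (sigmoid (S ω)) (sigmoid (T ω))) μ := by
  have hmeas : Measurable fun x : ℝ × ℝ => bernoulliLogLik (sigmoid x.1) (sigmoid x.2) := by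
    unfold bernoulliLogLik
    have := continuous_sigmoid.measurable
    fun_prop
  refine Integrable.mono' ((integrable_const (log 2)).add hT.abs)
    (hmeas.comp_aemeasurable (hS.aemeasurable.prodMk hT.aemeasurable)).aestronglyMeasurable ?_
  exact ae_of_all _ fun ω => abs_bernoulliLogLik_sigmoid_le (S ω) (T ω)

lemma ae_eq_of_integral_bernoulliLogLik_sigmoid_eq [IsFiniteMeasure μ] {S T : Ω → ℝ}
    (hS : Integrable S μ) (hT : Integrable T μ)
    (h : ∫ ω, bernoulliLogLik (sigmoid (S ω)) (sigmoid (T ω)) ∂μ =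
      ∫ ω, bernoulliLogLik (sigmoid (S ω)) (sigmoid (S ω)) ∂μ) :
    T =ᵐ[μ] S := by
  have hle : ∀ ω, bernoulliLogLik (sigmoid (S ω)) (sigmoid (T ω)) ≤
      bernoulliLogLik (sigmoid (S ω)) (sigmoid (S ω)) := fun ω =>
    bernoulliLogLik_le_self (sigmoid_mem_Ioo _) (sigmoid_mem_Ioo _)
  have hae := (integral_eq_iff_of_ae_le (integrable_bernoulliLogLik_sigmoid hS.1 hT)
    (integrable_bernoulliLogLik_sigmoid hS.1 hS) (ae_of_all _ hle)).1 h
  filter_upwards [hae] with ω hω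
  exact sigmoid_injective ((bernoulliLogLik_eq_self_iff (sigmoid_mem_Ioo _)
    (sigmoid_mem_Ioo _)).1 hω)

lemma eq_and_ae_eq_of_const_add_ae_eq [IsProbabilityMeasure μ] {X Y : Ω → ℝ} {a b : ℝ}
    (hX : Integrable X μ) (hY : Integrable Y μ) (hX0 : ∫ ω, X ω ∂μ = 0) (hY0 : ∫ ω, Y ω ∂μ = 0)
    (h : (fun ω => a + X ω) =ᵐ[μ] fun ω => b + Y ω) :
    a = b ∧ X =ᵐ[μ] Y := by
  have hab : a = b := by
    simpa [integral_add (integrable_const a) hX, integral_add (integrable_const b) hY, hX0, hY0]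
      using integral_congr_ae h
  refine ⟨hab, ?_⟩
  filter_upwards [h] with ω hω
  rw [hab] at hω
  exact add_left_cancel hω

end Integral

theorem logistic_parameter_identification
    {Ω : Type*} [MeasurableSpace Ω] (μ : Measure Ω) [IsProbabilityMeasure μ]
    {H : Type*} (Ψinv : H → Ω → ℝ)
    -- injectivity of the Loève isometry (elements of `L(X)` are identified a.e.)
    (hΨinj : ∀ β β' : H, Ψinv β =ᵐ[μ] Ψinv β' → β = β')
    (βstar : H) (β₀star : ℝ) (β : H) (β₀ : ℝ)
    (hint : Integrable (Ψinv β) μ) (hintstar : Integrable (Ψinv βstar) μ)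
    (hmean : ∫ ω, Ψinv β ω ∂μ = 0) (hmeanstar : ∫ ω, Ψinv βstar ω ∂μ = 0)
    -- expected log-likelihood
    (L : H → ℝ → ℝ)
    (hL : ∀ (b : H) (b₀ : ℝ), L b b₀ =
      ∫ ω, ((1 + Real.exp (-β₀star - Ψinv βstar ω))⁻¹ *
              Real.log ((1 + Real.exp (-b₀ - Ψinv b ω))⁻¹) +
            (1 - (1 + Real.exp (-β₀star - Ψinv βstar ω))⁻¹) *
              Real.log (1 - (1 + Real.exp (-b₀ - Ψinv b ω))⁻¹)) ∂μ)
    (heq : L β β₀ = L βstar β₀star) :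
    β₀ = β₀star ∧ β = βstar := by
  have hL_sigmoid : ∀ b b₀, L b b₀ = ∫ ω, bernoulliLogLik (sigmoid (β₀star + Ψinv βstar ω))
      (sigmoid (b₀ + Ψinv b ω)) ∂μ := by
    intro b b₀
    simp only [hL, bernoulliLogLik, sigmoid_def, neg_add']
  have hpredictor : (fun ω => β₀ + Ψinv β ω) =ᵐ[μ] fun ω => β₀star + Ψinv βstar ω := by
    refine ae_eq_of_integral_bernoulliLogLik_sigmoid_eq ((integrable_const _).add hintstar)
      ((integrable_const _).add hint) ?_
    rwa [hL_sigmoid, hL_sigmoid] at heq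
  obtain ⟨hβ₀, hΨ⟩ := eq_and_ae_eq_of_const_add_ae_eq hint hintstar hmean hmeanstar hpredictor
  exact ⟨hβ₀, hΨinj β βstar hΨ⟩
end
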